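/- arXiv:1506.08910 — 5 statements merged into one kernel-verified Lean document; each statement's English description precedes it below -/
import Mathlib

section
/- Let e ∈ ℝ^d satisfy ‖e‖₀ ≤ m and ‖e‖₂ ≤ ε, and let x be a standard Gaussian vector in ℝ^d. Then for every δ ∈ (0,1), with probability at least 1 − δ, |⟨e, x⟩| ≤ ε·√m·(√(log(2d)) + √(2·log(2/δ))). -/
/-! The variable `∑ i, e i * x i` is a sum of independent centred Gaussians, so it is sub-Gaussian
with variance proxy `∑ i, e i ^ 2 ≤ ε ^ 2`. The two-sided Chernoff bound then gives
`|∑ i, e i * x i| ≤ √(2 (∑ i, e i ^ 2) log (2 / δ))` with probability at least `1 - δ`. This is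
below the stated threshold because `e ≠ 0` forces `m ≥ 1`; the `√(log (2 d))` term is slack. -/

open MeasureTheory ProbabilityTheory

/-- The standard Gaussian measure on ℝ^d: coordinates are i.i.d. N(0,1). -/
noncomputable def stdGaussian (d : ℕ) : Measure (Fin d → ℝ) :=
  Measure.pi fun _ => gaussianReal 0 1

instance isProbabilityMeasure_stdGaussian (d : ℕ) :
    IsProbabilityMeasure (_root_.stdGaussian d) := by
  unfold _root_.stdGaussian; infer_instance

open Real Finset
open scoped NNReal ENNReal

namespace ProbabilityTheory

lemma hasSubgaussianMGF_id_gaussianReal (v : ℝ≥0) : HasSubgaussianMGF id v (gaussianReal 0 v) :=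
  ⟨integrable_exp_mul_gaussianReal, fun t => by simp [mgf_id_gaussianReal]⟩

lemma hasSubgaussianMGF_sum_mul_pi {ι : Type*} [Fintype ι] {μ : ι → Measure ℝ}
    [∀ i, IsProbabilityMeasure (μ i)] {c : ι → ℝ≥0} (h : ∀ i, HasSubgaussianMGF id (c i) (μ i))
    (a : ι → ℝ) :
    HasSubgaussianMGF (fun x : ι → ℝ => ∑ i, a i * x i) (∑ i, ⟨a i ^ 2, sq_nonneg _⟩ * c i)
      (Measure.pi μ) := by
  refine HasSubgaussianMGF.sum_of_iIndepFun
    (iIndepFun_pi (X := fun i y => a i * y) fun i => by fun_prop) fun i _ => ?_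
  refine HasSubgaussianMGF.of_map (Y := fun x : ι → ℝ => x i) (X := fun y => a i * y)
    (measurable_pi_apply i).aemeasurable ?_
  rw [(measurePreserving_eval μ i).map_eq]
  exact (h i).const_mul (a i)

variable {Ω : Type*} {mΩ : MeasurableSpace Ω} {μ : Measure Ω} {X : Ω → ℝ} {c : ℝ≥0}

lemma HasSubgaussianMGF.measureReal_abs_ge_le [IsFiniteMeasure μ]
    (h : HasSubgaussianMGF X c μ) {t : ℝ} (ht : 0 ≤ t) :
    μ.real {ω | t ≤ |X ω|} ≤ 2 * exp (-t ^ 2 / (2 * c)) := by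
  have hsub : {ω | t ≤ |X ω|} ⊆ {ω | t ≤ X ω} ∪ {ω | t ≤ (-X) ω} := fun ω hω => by
    rcases le_abs'.mp (show t ≤ |X ω| from hω) with hneg | hpos
    · exact Or.inr (show t ≤ -X ω by linarith)
    · exact Or.inl hpos
  calc μ.real {ω | t ≤ |X ω|}
      ≤ μ.real {ω | t ≤ X ω} + μ.real {ω | t ≤ (-X) ω} :=
        (measureReal_mono hsub).trans (measureReal_union_le _ _)
    _ ≤ exp (-t ^ 2 / (2 * c)) + exp (-t ^ 2 / (2 * c)) :=
        add_le_add (h.measure_ge_le ht) (h.neg.measure_ge_le ht)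
    _ = 2 * exp (-t ^ 2 / (2 * c)) := by ring

lemma HasSubgaussianMGF.ofReal_one_sub_le_measure_abs_le [IsProbabilityMeasure μ]
    (h : HasSubgaussianMGF X c μ) {δ : ℝ} (hδ : 0 < δ) :
    ENNReal.ofReal (1 - δ) ≤ μ {ω | |X ω| ≤ √(2 * c * log (2 / δ))} := by
  set t := √(2 * c * log (2 / δ))
  suffices hcompl : μ {ω | |X ω| ≤ t}ᶜ ≤ ENNReal.ofReal δ by
    have hsum := (measure_univ_le_add_compl {ω | |X ω| ≤ t} (μ := μ)).trans
      (add_le_add_right hcompl _)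
    rw [measure_univ, ← ENNReal.ofReal_one] at hsum
    rw [ENNReal.ofReal_sub _ hδ.le]
    exact tsub_le_iff_right.mpr hsum
  have hcompl_eq : {ω | |X ω| ≤ t}ᶜ = {ω | t < |X ω|} := by ext; simp
  rw [hcompl_eq]
  -- With `c = 0` the Chernoff bound degenerates to `exp (-t ^ 2 / 0) = 1`, but then `X = 0` a.e.
  rcases eq_or_ne c 0 with rfl | hc
  · have hX0 : ∀ᵐ ω ∂μ, ¬ t < |X ω| := (h.ae_eq_zero_of_hasSubgaussianMGF_zero).mono
      fun ω hω => by simp [hω, t]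
    rw [ae_iff] at hX0
    simp only [not_not] at hX0
    simp [hX0]
  rcases le_or_gt 1 δ with hδ1 | hδ1
  · exact prob_le_one.trans (ENNReal.ofReal_one ▸ ENNReal.ofReal_le_ofReal hδ1)
  have hlog : 0 < log (2 / δ) := log_pos (by rw [lt_div_iff₀ hδ]; linarith)
  have htail : 2 * exp (-t ^ 2 / (2 * c)) = δ := by
    have hc' : (0 : ℝ) < c := by positivity
    rw [sq_sqrt (by positivity), show -(2 * c * log (2 / δ)) / (2 * c) = -log (2 / δ) by
      field_simp, exp_neg, exp_log (by positivity)]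
    field_simp
  calc μ {ω | t < |X ω|} ≤ μ {ω | t ≤ |X ω|} := measure_mono fun ω (hω : t < |X ω|) => hω.le
    _ = ENNReal.ofReal (μ.real {ω | t ≤ |X ω|}) :=
        (ofReal_measureReal (measure_ne_top _ _)).symm
    _ ≤ ENNReal.ofReal δ :=
        ENNReal.ofReal_le_ofReal (htail ▸ h.measureReal_abs_ge_le (sqrt_nonneg _))

end ProbabilityTheory

lemma sum_sq_le_mul_sum_sq_of_card_support_le {ι : Type*} [Fintype ι] {e : ι → ℝ} {m : ℕ}
    (he : #{i | e i ≠ 0} ≤ m) : ∑ i, e i ^ 2 ≤ m * ∑ i, e i ^ 2 := by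
  rcases Nat.eq_zero_or_pos #{i | e i ≠ 0} with h0 | hpos
  · have : ∀ i, e i = 0 := by simpa [Finset.filter_eq_empty_iff] using h0
    simp [this]
  · have hm : (1 : ℝ) ≤ m := by exact_mod_cast hpos.trans_le he
    exact le_mul_of_one_le_left (by positivity) hm

/-- Let e ∈ ℝ^d satisfy ‖e‖₀ ≤ m and ‖e‖₂ ≤ ε, and let x be a standard
Gaussian vector in ℝ^d. Then for every δ ∈ (0,1), with probability at least 1 − δ,
|⟨e, x⟩| ≤ ε·√m·(√(log(2d)) + √(2·log(2/δ))). -/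
theorem inner_stdGaussian_sparse_bound
    (d m : ℕ) (e : Fin d → ℝ) (ε : ℝ)
    (he0 : (Finset.univ.filter fun i => e i ≠ 0).card ≤ m)
    (he2 : Real.sqrt (∑ i, (e i) ^ 2) ≤ ε)
    (δ : ℝ) (hδ : δ ∈ Set.Ioo (0 : ℝ) 1) :
    ENNReal.ofReal (1 - δ) ≤
      stdGaussian d {x | |∑ i, e i * x i| ≤
        ε * Real.sqrt m * (Real.sqrt (Real.log (2 * d)) + Real.sqrt (2 * Real.log (2 / δ)))} := by
  have hX : HasSubgaussianMGF (fun x : Fin d → ℝ => ∑ i, e i * x i)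
      (∑ i, ⟨e i ^ 2, sq_nonneg _⟩ * 1) (stdGaussian d) :=
    hasSubgaussianMGF_sum_mul_pi (fun _ => hasSubgaussianMGF_id_gaussianReal 1) e
  refine (hX.ofReal_one_sub_le_measure_abs_le hδ.1).trans
    (measure_mono (Set.ofPred_subset_ofPred.mpr fun x hx => hx.trans ?_))
  have hsparse : √(∑ i, e i ^ 2) ≤ ε * √m := calc
    √(∑ i, e i ^ 2) ≤ √(m * ∑ i, e i ^ 2) :=
      sqrt_le_sqrt (sum_sq_le_mul_sum_sq_of_card_support_le he0)
    _ = √m * √(∑ i, e i ^ 2) := sqrt_mul m.cast_nonneg _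
    _ ≤ √m * ε := mul_le_mul_of_nonneg_left he2 (sqrt_nonneg _)
    _ = ε * √m := mul_comm _ _
  have hε : 0 ≤ ε * √m := (sqrt_nonneg _).trans hsparse
  push_cast
  calc √(2 * (∑ i, e i ^ 2 * 1) * log (2 / δ)) = √(∑ i, e i ^ 2) * √(2 * log (2 / δ)) := by
        rw [← sqrt_mul (by positivity)]; ring_nf
    _ ≤ ε * √m * √(2 * log (2 / δ)) := mul_le_mul_of_nonneg_right hsparse (sqrt_nonneg _)
    _ ≤ ε * √m * (√(log (2 * d)) + √(2 * log (2 / δ))) :=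
        mul_le_mul_of_nonneg_left (le_add_of_nonneg_left (sqrt_nonneg _)) hε
end

section
/- Let x₁, …, xₙ ∈ ℝ^d, y₁, …, yₙ ∈ [0,1], and ŵ, w⋆ ∈ ℝ^d. Let ĝ, g⋆ : ℝ → [0,1] both be 1-Lipschitz, and suppose Σᵢ (ĝ(⟨ŵ, xᵢ⟩) − yᵢ)² ≤ Σᵢ (g⋆(⟨ŵ, xᵢ⟩) − yᵢ)². Then (1/n)·Σᵢ [ (ĝ(⟨w⋆, xᵢ⟩) − yᵢ)² − (g⋆(⟨w⋆, xᵢ⟩) − yᵢ)² ] ≤ (1/n)·Σᵢ ⟨ŵ − w⋆, xᵢ⟩² + (4/n)·Σᵢ |⟨ŵ − w⋆, xᵢ⟩|. -/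
/-! The Lipschitz property gives, pointwise and for each of `ĝ, g⋆`, that moving the argument
from `⟨ŵ, xᵢ⟩` to `⟨w⋆, xᵢ⟩` changes the squared error by at most `2 |⟨ŵ − w⋆, xᵢ⟩|`, since
`u² − v² = (u + v)(u − v)` with `|u + v| ≤ 2`. So the excess at `⟨w⋆, xᵢ⟩` is at most the excess
at `⟨ŵ, xᵢ⟩` plus `4 |⟨ŵ − w⋆, xᵢ⟩|`, and the excess at `⟨ŵ, xᵢ⟩` has nonpositive sum by the
optimality of `ĝ`. The quadratic term of the bound is not even needed. -/

open Finset Set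

lemma sq_sub_sq_le_two_mul_abs_sub {u v : ℝ} (hu : |u| ≤ 1) (hv : |v| ≤ 1) :
    u ^ 2 - v ^ 2 ≤ 2 * |u - v| :=
  calc u ^ 2 - v ^ 2 = (u + v) * (u - v) := sq_sub_sq u v
    _ ≤ |u + v| * |u - v| := (le_abs_self _).trans (abs_mul _ _).le
    _ ≤ 2 * |u - v| := by gcongr; linarith [abs_add_le u v]

lemma LipschitzWith.sq_sub_sq_le {g : ℝ → ℝ} (hg : LipschitzWith 1 g)
    (hg01 : ∀ t, g t ∈ Icc (0 : ℝ) 1) {y : ℝ} (hy : y ∈ Icc (0 : ℝ) 1) (a b : ℝ) :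
    (g b - y) ^ 2 - (g a - y) ^ 2 ≤ 2 * |b - a| := by
  have hdev : ∀ t, |g t - y| ≤ 1 := fun t =>
    abs_sub_le_iff.2 ⟨by linarith [(hg01 t).2, hy.1], by linarith [(hg01 t).1, hy.2]⟩
  calc (g b - y) ^ 2 - (g a - y) ^ 2 ≤ 2 * |(g b - y) - (g a - y)| :=
        sq_sub_sq_le_two_mul_abs_sub (hdev b) (hdev a)
    _ ≤ 2 * |b - a| := by
        rw [sub_sub_sub_cancel_right]
        exact mul_le_mul_of_nonneg_left
          (by simpa [Real.dist_eq] using hg.dist_le_mul b a) zero_le_two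

lemma sum_sq_excess_le_of_sum_sq_le {ι : Type*} (s : Finset ι) {ghat gstar : ℝ → ℝ}
    (hghat : LipschitzWith 1 ghat) (hgstar : LipschitzWith 1 gstar)
    (hghat01 : ∀ t, ghat t ∈ Icc (0 : ℝ) 1) (hgstar01 : ∀ t, gstar t ∈ Icc (0 : ℝ) 1)
    {y a b : ι → ℝ} (hy : ∀ i ∈ s, y i ∈ Icc (0 : ℝ) 1)
    (hopt : ∑ i ∈ s, (ghat (a i) - y i) ^ 2 ≤ ∑ i ∈ s, (gstar (a i) - y i) ^ 2) :
    ∑ i ∈ s, ((ghat (b i) - y i) ^ 2 - (gstar (b i) - y i) ^ 2) ≤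
      4 * ∑ i ∈ s, |a i - b i| := by
  have hpoint : ∀ i ∈ s, (ghat (b i) - y i) ^ 2 - (gstar (b i) - y i) ^ 2 ≤
      4 * |a i - b i| + ((ghat (a i) - y i) ^ 2 - (gstar (a i) - y i) ^ 2) := fun i hi => by
    have hhat := hghat.sq_sub_sq_le hghat01 (hy i hi) (a i) (b i)
    have hstar := hgstar.sq_sub_sq_le hgstar01 (hy i hi) (b i) (a i)
    rw [abs_sub_comm] at hhat
    linarith
  calc ∑ i ∈ s, ((ghat (b i) - y i) ^ 2 - (gstar (b i) - y i) ^ 2)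
      ≤ ∑ i ∈ s, (4 * |a i - b i| + ((ghat (a i) - y i) ^ 2 - (gstar (a i) - y i) ^ 2)) :=
        sum_le_sum hpoint
    _ = 4 * ∑ i ∈ s, |a i - b i| +
          (∑ i ∈ s, (ghat (a i) - y i) ^ 2 - ∑ i ∈ s, (gstar (a i) - y i) ^ 2) := by
        rw [sum_add_distrib, mul_sum, sum_sub_distrib]
    _ ≤ 4 * ∑ i ∈ s, |a i - b i| := by linarith

theorem empirical_excess_decomposition_general
    (d n : ℕ)
    (x : Fin n → Fin d → ℝ) (y : Fin n → ℝ)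
    (hy : ∀ i, y i ∈ Set.Icc (0 : ℝ) 1)
    (what wstar : Fin d → ℝ)
    (ghat gstar : ℝ → ℝ)
    (hghatLip : LipschitzWith 1 ghat) (hgstarLip : LipschitzWith 1 gstar)
    (hghat01 : ∀ t, ghat t ∈ Set.Icc (0 : ℝ) 1)
    (hgstar01 : ∀ t, gstar t ∈ Set.Icc (0 : ℝ) 1)
    (hopt : ∑ i, (ghat (∑ j, what j * x i j) - y i) ^ 2 ≤
            ∑ i, (gstar (∑ j, what j * x i j) - y i) ^ 2) :
    (1 / (n : ℝ)) * ∑ i, ((ghat (∑ j, wstar j * x i j) - y i) ^ 2 -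
        (gstar (∑ j, wstar j * x i j) - y i) ^ 2) ≤
      (1 / (n : ℝ)) * ∑ i, (∑ j, (what j - wstar j) * x i j) ^ 2 +
      (4 / (n : ℝ)) * ∑ i, |∑ j, (what j - wstar j) * x i j| := by
  have hproj : ∀ i, ∑ j, (what j - wstar j) * x i j =
      ∑ j, what j * x i j - ∑ j, wstar j * x i j := fun i => by
    simp only [sub_mul, sum_sub_distrib]
  have hexcess := sum_sq_excess_le_of_sum_sq_le univ hghatLip hgstarLip hghat01 hgstar01
    (fun i _ => hy i) hopt (b := fun i => ∑ j, wstar j * x i j)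
  have hquad : 0 ≤ (1 / (n : ℝ)) * ∑ i, (∑ j, (what j - wstar j) * x i j) ^ 2 := by positivity
  simp only [hproj] at hquad ⊢
  calc (1 / (n : ℝ)) * ∑ i, ((ghat (∑ j, wstar j * x i j) - y i) ^ 2 -
        (gstar (∑ j, wstar j * x i j) - y i) ^ 2)
      ≤ (1 / (n : ℝ)) * (4 * ∑ i, |∑ j, what j * x i j - ∑ j, wstar j * x i j|) := by gcongr
    _ = (4 / (n : ℝ)) * ∑ i, |∑ j, what j * x i j - ∑ j, wstar j * x i j| := by ring
    _ ≤ _ := le_add_of_nonneg_left hquad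

/-- If ĝ has smaller empirical squared error than g⋆ along the projections
⟨ŵ, xᵢ⟩, then the empirical excess of ĝ over g⋆ along the projections ⟨w⋆, xᵢ⟩ is bounded
by the quadratic and linear empirical moments of ⟨ŵ − w⋆, xᵢ⟩. -/
theorem empirical_excess_decomposition
    (d n : ℕ) (hn : 0 < n)
    (x : Fin n → Fin d → ℝ) (y : Fin n → ℝ)
    (hy : ∀ i, y i ∈ Set.Icc (0 : ℝ) 1)
    (what wstar : Fin d → ℝ)
    (ghat gstar : ℝ → ℝ)
    (hghatLip : LipschitzWith 1 ghat) (hgstarLip : LipschitzWith 1 gstar)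
    (hghat01 : ∀ t, ghat t ∈ Set.Icc (0 : ℝ) 1)
    (hgstar01 : ∀ t, gstar t ∈ Set.Icc (0 : ℝ) 1)
    (hopt : ∑ i, (ghat (∑ j, what j * x i j) - y i) ^ 2 ≤
            ∑ i, (gstar (∑ j, what j * x i j) - y i) ^ 2) :
    (1 / (n : ℝ)) * ∑ i, ((ghat (∑ j, wstar j * x i j) - y i) ^ 2 -
        (gstar (∑ j, wstar j * x i j) - y i) ^ 2) ≤
      (1 / (n : ℝ)) * ∑ i, (∑ j, (what j - wstar j) * x i j) ^ 2 +
      (4 / (n : ℝ)) * ∑ i, |∑ j, (what j - wstar j) * x i j| :=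
  empirical_excess_decomposition_general d n x y hy what wstar ghat gstar hghatLip hgstarLip hghat01
    hgstar01 hopt
end

section
/- Let W ≥ 1, n ≥ 1, fix points z₁, …, zₙ ∈ [−W, W], and let ε₁, …, εₙ be i.i.d. Rademacher random variables (uniform on {−1, +1}). Then the empirical Rademacher complexity of the class G of all monotone nondecreasing 1-Lipschitz functions g : [−W, W] → [0,1] satisfies E[ sup_{g ∈ G} (1/n)·Σᵢ εᵢ·g(zᵢ) ] ≤ 40·√W / √n. -/
open MeasureTheory

/-- The law of n i.i.d. Rademacher random variables (uniform on {−1, +1}),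
as a measure on Fin n → ℝ. -/
noncomputable def rademacherSigns (n : ℕ) : Measure (Fin n → ℝ) :=
  Measure.pi fun _ =>
    ((1 : ENNReal) / 2) • Measure.dirac (-1 : ℝ) + ((1 : ENNReal) / 2) • Measure.dirac (1 : ℝ)

/-!
Sort the points so that `z ∘ σ` is nonincreasing. For monotone `g` with values in `[0, 1]` the
weights `g (z (σ j))` are then nonincreasing, and summation by parts writes `∑ εᵢ g(zᵢ)` as a
combination of the partial sums `S_k` of `ε ∘ σ` with nonnegative coefficients of total mass at
most one, so the supremum over the class is at most `max_{k ≤ n} |S_k|`. Since `ε ∘ σ` is again a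
Rademacher vector, Doob's L² maximal inequality for the submartingale `|S_k|` gives
`E max_k |S_k| ≤ 2 √n`, hence the complexity is at most `2 / √n`.
-/

open Finset
open scoped BigOperators ENNReal

namespace RademacherMonotone

section PartialSums

variable (e : ℕ → ℝ)

def partialSum (k : ℕ) : ℝ := ∑ j ∈ range k, e j

def maxAbsPartialSum : ℕ → ℝ
  | 0 => 0
  | k + 1 => max (maxAbsPartialSum k) |partialSum e (k + 1)|

variable {e}

lemma partialSum_succ (k : ℕ) : partialSum e (k + 1) = partialSum e k + e k :=
  sum_range_succ e k

lemma maxAbsPartialSum_succ (k : ℕ) :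
    maxAbsPartialSum e (k + 1) = max (maxAbsPartialSum e k) |partialSum e (k + 1)| := rfl

lemma maxAbsPartialSum_mono : Monotone (maxAbsPartialSum e) :=
  monotone_nat_of_le_succ fun _ => le_max_left _ _

lemma abs_partialSum_le_maxAbsPartialSum {j k : ℕ} (h : j ≤ k) :
    |partialSum e j| ≤ maxAbsPartialSum e k := by
  refine le_trans ?_ (maxAbsPartialSum_mono h)
  cases j with
  | zero => simp [partialSum, maxAbsPartialSum]
  | succ j => exact le_max_right _ _

lemma maxAbsPartialSum_nonneg (k : ℕ) : 0 ≤ maxAbsPartialSum e k :=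
  (abs_nonneg _).trans (abs_partialSum_le_maxAbsPartialSum (Nat.zero_le k))

lemma partialSum_congr {e' : ℕ → ℝ} {k : ℕ} (h : ∀ j < k, e j = e' j) :
    partialSum e k = partialSum e' k :=
  sum_congr rfl fun j hj => h j (mem_range.mp hj)

lemma maxAbsPartialSum_congr {e' : ℕ → ℝ} {k : ℕ} (h : ∀ j < k, e j = e' j) :
    maxAbsPartialSum e k = maxAbsPartialSum e' k := by
  induction k with
  | zero => rfl
  | succ k ih =>
    rw [maxAbsPartialSum_succ, maxAbsPartialSum_succ, ih fun j hj => h j (by omega),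
      partialSum_congr h]

lemma sum_mul_eq_mul_partialSum_add_sum (b : ℕ → ℝ) (n : ℕ) :
    ∑ j ∈ range n, b j * e j
      = b n * partialSum e n + ∑ k ∈ range n, (b k - b (k + 1)) * partialSum e (k + 1) := by
  induction n with
  | zero => simp [partialSum]
  | succ n ih =>
    rw [sum_range_succ, ih, sum_range_succ, partialSum_succ]
    ring

lemma sum_mul_le_maxAbsPartialSum {b : ℕ → ℝ} {n : ℕ} (hb : ∀ k < n, b (k + 1) ≤ b k)
    (hbn : 0 ≤ b n) (hb0 : b 0 ≤ 1) :
    ∑ j ∈ range n, b j * e j ≤ maxAbsPartialSum e n := by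
  have hM := maxAbsPartialSum_nonneg (e := e) n
  have hS (j : ℕ) (hj : j ≤ n) : partialSum e j ≤ maxAbsPartialSum e n :=
    (le_abs_self _).trans (abs_partialSum_le_maxAbsPartialSum hj)
  have hterms : ∑ k ∈ range n, (b k - b (k + 1)) * partialSum e (k + 1)
      ≤ ∑ k ∈ range n, (b k - b (k + 1)) * maxAbsPartialSum e n :=
    sum_le_sum fun k hk => mul_le_mul_of_nonneg_left (hS _ (mem_range.mp hk))
      (sub_nonneg.mpr (hb k (mem_range.mp hk)))
  rw [← sum_mul, sum_range_sub'] at hterms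
  rw [sum_mul_eq_mul_partialSum_add_sum]
  nlinarith [mul_le_mul_of_nonneg_left (hS n le_rfl) hbn]

/-- A pathwise form of Doob's maximal inequality. -/
lemma sum_maxAbsPartialSum_mul_add_sq_le (n : ℕ) :
    ∑ k ∈ range n, maxAbsPartialSum e k * (|partialSum e (k + 1)| - |partialSum e k|)
      + maxAbsPartialSum e n ^ 2 / 2 ≤ maxAbsPartialSum e n * |partialSum e n| := by
  induction n with
  | zero => simp [maxAbsPartialSum]
  | succ n ih =>
    have hM := maxAbsPartialSum_nonneg (e := e) n
    have hS := abs_partialSum_le_maxAbsPartialSum (e := e) (le_refl n)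
    rw [sum_range_succ, maxAbsPartialSum_succ]
    rcases max_cases (maxAbsPartialSum e n) |partialSum e (n + 1)| with ⟨h, hle⟩ | ⟨h, hlt⟩ <;>
      rw [h] <;> nlinarith [sq_nonneg (|partialSum e (n + 1)| - maxAbsPartialSum e n)]

end PartialSums

section FinVectors

variable {n : ℕ}

def seqOfFin (ε : Fin n → ℝ) (j : ℕ) : ℝ := if h : j < n then ε ⟨j, h⟩ else 0

lemma partialSum_seqOfFin_succ (ε : Fin n → ℝ) {k : ℕ} (hk : k < n) :
    partialSum (seqOfFin ε) (k + 1) = partialSum (seqOfFin ε) k + ε ⟨k, hk⟩ := by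
  rw [partialSum_succ, seqOfFin, dif_pos hk]

lemma sum_range_seqOfFin_mul (x y : Fin n → ℝ) :
    ∑ j ∈ range n, seqOfFin x j * seqOfFin y j = ∑ i, x i * y i := by
  rw [← Fin.sum_univ_eq_sum_range (fun j => seqOfFin x j * seqOfFin y j)]
  simp [seqOfFin]

lemma sum_mul_comp_le_maxAbsPartialSum {D : Set ℝ} {g : ℝ → ℝ} (hg : MonotoneOn g D)
    (hgD : Set.MapsTo g D (Set.Icc 0 1)) {z : Fin n → ℝ} (hz : ∀ i, z i ∈ D)
    {σ : Equiv.Perm (Fin n)} (hσ : Antitone (z ∘ σ)) (ε : Fin n → ℝ) :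
    ∑ i, ε i * g (z i) ≤ maxAbsPartialSum (seqOfFin (ε ∘ σ)) n := by
  set b := seqOfFin (g ∘ z ∘ σ)
  have hb : ∀ k < n, b (k + 1) ≤ b k := by
    intro k hk
    simp only [b, seqOfFin, dif_pos hk, Function.comp_apply]
    split_ifs
    · exact hg (hz _) (hz _) (hσ (Fin.mk_le_mk.mpr k.le_succ))
    · exact (hgD (hz _)).1
  have hb0 : b 0 ≤ 1 := by
    simp only [b, seqOfFin]
    split_ifs
    exacts [(hgD (hz _)).2, zero_le_one]
  calc ∑ i, ε i * g (z i) = ∑ i, (g ∘ z ∘ σ) i * (ε ∘ σ) i := by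
        rw [← Equiv.sum_comp σ]; simp [mul_comm]
    _ = ∑ j ∈ range n, b j * seqOfFin (ε ∘ σ) j := (sum_range_seqOfFin_mul _ _).symm
    _ ≤ maxAbsPartialSum (seqOfFin (ε ∘ σ)) n :=
        sum_mul_le_maxAbsPartialSum hb (by simp [b, seqOfFin]) hb0

end FinVectors

section SignVectors

variable {n : ℕ}

def signVec (s : Fin n → Bool) : Fin n → ℝ := fun i => if s i then 1 else -1

def flipAt (i : Fin n) : Equiv.Perm (Fin n → Bool) :=
  Function.Involutive.toPerm (fun s => Function.update s i !(s i)) fun s => by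
    simp [Function.update_idem]

lemma flipAt_apply (i : Fin n) (s : Fin n → Bool) : flipAt i s = Function.update s i !(s i) := rfl

lemma signVec_flipAt_self (s : Fin n → Bool) (i : Fin n) :
    signVec (flipAt i s) i = -signVec s i := by
  simp only [signVec, flipAt_apply, Function.update_self]
  cases s i <;> norm_num

lemma signVec_flipAt_of_ne (s : Fin n → Bool) {i j : Fin n} (h : j ≠ i) :
    signVec (flipAt i s) j = signVec s j := by
  simp only [signVec, flipAt_apply, Function.update_of_ne h]

lemma seqOfFin_signVec_flipAt (s : Fin n → Bool) {k : ℕ} (hk : k < n) {j : ℕ} (hj : j < k) :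
    seqOfFin (signVec (flipAt ⟨k, hk⟩ s)) j = seqOfFin (signVec s) j := by
  simp only [seqOfFin, dif_pos (hj.trans hk)]
  exact signVec_flipAt_of_ne s (by simp [Fin.ext_iff]; omega)

lemma expect_apply_signVec_of_flipAt_invariant {k : ℕ} (hk : k < n) (H : (Fin n → Bool) → ℝ → ℝ)
    (hH : ∀ s, H (flipAt ⟨k, hk⟩ s) = H s) :
    𝔼 s, H s (signVec s ⟨k, hk⟩) = 𝔼 s, (H s 1 + H s (-1)) / 2 := by
  have hflip : 𝔼 s, H s (-signVec s ⟨k, hk⟩) = 𝔼 s, H s (signVec s ⟨k, hk⟩) :=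
    Fintype.expect_equiv (flipAt ⟨k, hk⟩) _ _ fun s => by rw [hH, signVec_flipAt_self]
  have hpair (s : Fin n → Bool) :
      H s (signVec s ⟨k, hk⟩) + H s (-signVec s ⟨k, hk⟩) = H s 1 + H s (-1) := by
    simp only [signVec]
    cases s ⟨k, hk⟩ <;> norm_num [add_comm]
  rw [← expect_div, ← expect_congr rfl fun s _ => hpair s, expect_add_distrib, hflip]
  ring

lemma expect_sq_partialSum_signVec {k : ℕ} (hk : k ≤ n) :
    𝔼 s : Fin n → Bool, partialSum (seqOfFin (signVec s)) k ^ 2 = k := by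
  induction k with
  | zero => simp [partialSum]
  | succ k ih =>
    have hkn : k < n := hk
    simp_rw [partialSum_seqOfFin_succ _ hkn]
    rw [expect_apply_signVec_of_flipAt_invariant hkn (fun s y => (partialSum (seqOfFin (signVec s)) k + y) ^ 2)
      fun s => by rw [partialSum_congr fun j hj => seqOfFin_signVec_flipAt s hkn hj]]
    have hpt (s : Fin n → Bool) : ((partialSum (seqOfFin (signVec s)) k + 1) ^ 2
        + (partialSum (seqOfFin (signVec s)) k + -1) ^ 2) / 2
        = partialSum (seqOfFin (signVec s)) k ^ 2 + 1 := by ring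
    rw [expect_congr rfl fun s _ => hpt s, expect_add_distrib, ih hkn.le, Fintype.expect_const]
    push_cast; ring

/-- `|S_k|` is a submartingale. -/
lemma expect_maxAbsPartialSum_mul_increment_nonneg {k : ℕ} (hk : k < n) :
    0 ≤ 𝔼 s : Fin n → Bool, maxAbsPartialSum (seqOfFin (signVec s)) k
      * (|partialSum (seqOfFin (signVec s)) (k + 1)| - |partialSum (seqOfFin (signVec s)) k|) := by
  simp_rw [partialSum_seqOfFin_succ _ hk]
  rw [expect_apply_signVec_of_flipAt_invariant hk (fun s y => maxAbsPartialSum (seqOfFin (signVec s)) k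
      * (|partialSum (seqOfFin (signVec s)) k + y| - |partialSum (seqOfFin (signVec s)) k|))
    fun s => by
      have hprefix := fun j (hj : j < k) => seqOfFin_signVec_flipAt s hk hj
      rw [partialSum_congr hprefix, maxAbsPartialSum_congr hprefix]]
  refine expect_nonneg fun s _ => ?_
  set S := partialSum (seqOfFin (signVec s)) k
  have hconvex : 2 * |S| ≤ |S + 1| + |S + -1| := by
    have h := abs_add_le (S + 1) (S + -1)
    rwa [show S + 1 + (S + -1) = 2 * S by ring, abs_mul, abs_two] at h
  have hM := maxAbsPartialSum_nonneg (e := seqOfFin (signVec s)) k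
  nlinarith

lemma expect_sq_maxAbsPartialSum_le :
    𝔼 s : Fin n → Bool, maxAbsPartialSum (seqOfFin (signVec s)) n ^ 2 ≤ 4 * n := by
  set M := fun s : Fin n → Bool => maxAbsPartialSum (seqOfFin (signVec s)) n
  set S := fun s : Fin n → Bool => partialSum (seqOfFin (signVec s)) n
  set D := fun s : Fin n → Bool => ∑ k ∈ range n, maxAbsPartialSum (seqOfFin (signVec s)) k
      * (|partialSum (seqOfFin (signVec s)) (k + 1)| - |partialSum (seqOfFin (signVec s)) k|)
  have hpath (s : Fin n → Bool) : M s ^ 2 ≤ 4 * (S s ^ 2 - D s) := by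
    nlinarith [sum_maxAbsPartialSum_mul_add_sq_le (e := seqOfFin (signVec s)) n,
      sq_nonneg (M s - 2 * |S s|), sq_abs (S s)]
  have hD : 0 ≤ 𝔼 s, D s := by
    simp only [D, expect_sum_comm]
    exact sum_nonneg fun k hk => expect_maxAbsPartialSum_mul_increment_nonneg (mem_range.mp hk)
  calc 𝔼 s, M s ^ 2 ≤ 𝔼 s, 4 * (S s ^ 2 - D s) := expect_le_expect fun s _ => hpath s
    _ = 4 * (n - 𝔼 s, D s) := by
      rw [← mul_expect, expect_sub_distrib, expect_sq_partialSum_signVec le_rfl]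
    _ ≤ 4 * n := by linarith

lemma expect_maxAbsPartialSum_le :
    𝔼 s : Fin n → Bool, maxAbsPartialSum (seqOfFin (signVec s)) n ≤ 2 * √n := by
  have hCS := expect_mul_sq_le_sq_mul_sq univ (fun _ => (1 : ℝ))
    fun s : Fin n → Bool => maxAbsPartialSum (seqOfFin (signVec s)) n
  simp only [one_mul, one_pow, Fintype.expect_const] at hCS
  have h2 : (2 * √n) ^ 2 = 4 * n := by rw [mul_pow, Real.sq_sqrt (Nat.cast_nonneg n)]; norm_num
  exact le_of_sq_le_sq (by rw [h2]; linarith [expect_sq_maxAbsPartialSum_le (n := n)]) (by positivity)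

end SignVectors

section RademacherSigns

lemma rademacherSigns_eq_sum_dirac (n : ℕ) :
    rademacherSigns n = ∑ s : Fin n → Bool, ((2 : ℝ≥0∞) ^ n)⁻¹ • Measure.dirac (signVec s) := by
  unfold rademacherSigns
  set ν : Measure ℝ := (1 / 2 : ℝ≥0∞) • Measure.dirac (-1) + (1 / 2 : ℝ≥0∞) • Measure.dirac 1
  have : IsFiniteMeasure ν := ⟨by simp [ν]⟩
  refine Measure.pi_eq fun A hA => ?_
  have hcoord (i : Fin n) :
      ν (A i) = ∑ b : Bool, 2⁻¹ * (A i).indicator 1 (if b then (1 : ℝ) else -1) := by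
    simp [ν, add_comm]
  simp_rw [hcoord, Fintype.prod_sum, Measure.coe_finsetSum, Finset.sum_apply, Measure.smul_apply,
    Measure.dirac_apply' _ (MeasurableSet.univ_pi hA), ← Finset.coe_univ,
    Set.indicator_pi_one_apply, smul_eq_mul, prod_mul_distrib, prod_const, card_univ,
    Fintype.card_fin, ENNReal.inv_pow]
  rfl

lemma integral_rademacherSigns (n : ℕ) (f : (Fin n → ℝ) → ℝ) :
    ∫ ε, f ε ∂(rademacherSigns n) = 𝔼 s, f (signVec s) := by
  rw [rademacherSigns_eq_sum_dirac, integral_finsetSum_measure fun s _ =>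
    (integrable_dirac enorm_lt_top).smul_measure (by simp)]
  simp_rw [integral_smul_measure, integral_dirac, Fintype.expect_eq_sum_div_card,
    Fintype.card_fun, Fintype.card_bool, Fintype.card_fin]
  simp [div_eq_inv_mul, Finset.mul_sum]

end RademacherSigns

end RademacherMonotone

open RademacherMonotone in
theorem rademacher_complexity_monotone_lipschitz_general
    (W : ℝ) (hW : 1 ≤ W) (n : ℕ)
    (z : Fin n → ℝ) (hz : ∀ i, z i ∈ Set.Icc (-W) W) :
    (∫ ε, (⨆ g : {g : ℝ → ℝ // MonotoneOn g (Set.Icc (-W) W) ∧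
          LipschitzOnWith 1 g (Set.Icc (-W) W) ∧
          Set.MapsTo g (Set.Icc (-W) W) (Set.Icc (0 : ℝ) 1)},
        (1 / (n : ℝ)) * ∑ i, ε i * (g : ℝ → ℝ) (z i)) ∂(rademacherSigns n)) ≤
      40 * Real.sqrt W / Real.sqrt n := by
  set σ : Equiv.Perm (Fin n) := Fin.revPerm.trans (Tuple.sort z)
  have hσ : Antitone (z ∘ σ) := (Tuple.monotone_sort z).comp_antitone Fin.rev_anti
  have : Nonempty {g : ℝ → ℝ // MonotoneOn g (Set.Icc (-W) W) ∧
      LipschitzOnWith 1 g (Set.Icc (-W) W) ∧ Set.MapsTo g (Set.Icc (-W) W) (Set.Icc (0 : ℝ) 1)} :=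
    ⟨⟨0, monotoneOn_const, (LipschitzWith.const' 0).lipschitzOnWith,
      fun _ _ => ⟨le_rfl, zero_le_one⟩⟩⟩
  rw [integral_rademacherSigns]
  calc _ ≤ 𝔼 s : Fin n → Bool, (1 / n : ℝ) * maxAbsPartialSum (seqOfFin (signVec s ∘ σ)) n :=
        expect_le_expect fun s _ => ciSup_le fun g => mul_le_mul_of_nonneg_left
          (sum_mul_comp_le_maxAbsPartialSum g.2.1 g.2.2.2 hz hσ _) (by positivity)
    _ = (1 / n) * 𝔼 s : Fin n → Bool, maxAbsPartialSum (seqOfFin (signVec s)) n := by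
        rw [← mul_expect]
        congr 1
        exact Fintype.expect_bijective (· ∘ σ) σ.bijective.comp_right _ _ fun _ => rfl
    _ ≤ (1 / n) * (2 * √n) := by gcongr; exact expect_maxAbsPartialSum_le
    _ = 2 / √n := by rw [div_eq_mul_one_div 2, ← Real.sqrt_div_self']; ring
    _ ≤ 40 * √W / √n := by gcongr; linarith [Real.one_le_sqrt.mpr hW]

/-- the empirical Rademacher complexity of the class of monotone
nondecreasing 1-Lipschitz functions g : [−W, W] → [0,1] at points z₁,…,zₙ ∈ [−W,W]
is at most 40·√W/√n. -/
theorem rademacher_complexity_monotone_lipschitz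
    (W : ℝ) (hW : 1 ≤ W) (n : ℕ) (hn : 0 < n)
    (z : Fin n → ℝ) (hz : ∀ i, z i ∈ Set.Icc (-W) W) :
    (∫ ε, (⨆ g : {g : ℝ → ℝ // MonotoneOn g (Set.Icc (-W) W) ∧
          LipschitzOnWith 1 g (Set.Icc (-W) W) ∧
          Set.MapsTo g (Set.Icc (-W) W) (Set.Icc (0 : ℝ) 1)},
        (1 / (n : ℝ)) * ∑ i, ε i * (g : ℝ → ℝ) (z i)) ∂(rademacherSigns n)) ≤
      40 * Real.sqrt W / Real.sqrt n :=
  rademacher_complexity_monotone_lipschitz_general W hW n z hz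
end

section
/- Let W > 0 and 0 < r ≤ 1. There exists a finite set N of functions from [−W, W] to [0,1] with cardinality |N| ≤ (1/r)·2^{2W/r} such that for every monotone nondecreasing 1-Lipschitz function g : [−W, W] → [0,1] there is some f ∈ N with sup_{x ∈ [−W, W]} |g(x) − f(x)| ≤ r. -/
/-!
Sample `g` at the grid points `a + i r`, `i ≤ n = ⌊(b - a) / r⌋`, and round each sample `y` up to
the level `k r` with `k = min (⌊y / r⌋ + 1) ⌊1 / r⌋`. On the cell `[a + i r, a + (i + 1) r]` the
function stays within `r` of the level of the left endpoint; capping at `⌊1 / r⌋` is harmless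
because `g ≤ 1`, and it leaves only `⌊1 / r⌋ ≤ 1 / r` possible levels. Consecutive samples differ
by at most `r`, so consecutive levels differ by `0` or `1`: the step function of levels is
determined by its first value and the set of grid steps where it goes up, which leaves at most
`⌊1 / r⌋ 2 ^ n ≤ (1 / r) 2 ^ ((b - a) / r)` step functions.
-/

open Finset

theorem MonotoneOn.mem_Icc_of_lipschitzOnWith_one {s : Set ℝ} {g : ℝ → ℝ} {u x r : ℝ}
    (hmono : MonotoneOn g s) (hlip : LipschitzOnWith 1 g s) (hu : u ∈ s) (hx : x ∈ s)
    (hux : u ≤ x) (hxu : x ≤ u + r) : g x ∈ Set.Icc (g u) (g u + r) := by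
  refine ⟨hmono hu hx hux, ?_⟩
  have := hlip.le_add_mul hx hu
  rw [Real.dist_eq, abs_of_nonneg (sub_nonneg.2 hux)] at this
  push_cast at this
  linarith

namespace MonotoneLipschitzNet

noncomputable section

def level (r y : ℝ) : ℕ := min (⌊y / r⌋₊ + 1) ⌊1 / r⌋₊

def cellIndex (a r : ℝ) (n : ℕ) (x : ℝ) : ℕ := min n ⌊(x - a) / r⌋₊

/-- The cap only serves to keep every member of the net `[0, 1]`-valued: on the data coming from
an actual function it is inactive. -/
def stepFun (a r : ℝ) (n c : ℕ) (S : Finset ℕ) (x : ℝ) : ℝ :=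
  r * min (c + #{j ∈ S | j < cellIndex a r n x}) ⌊1 / r⌋₊

variable {r : ℝ}

theorem one_le_level (hr : 0 < r) (hr1 : r ≤ 1) (y : ℝ) : 1 ≤ level r y :=
  le_min (Nat.le_add_left _ _) ((Nat.one_le_floor_iff _).2 (by rw [le_div_iff₀ hr]; linarith))

theorem abs_sub_mul_level_le (hr : 0 < r) {y z : ℝ} (hy : 0 ≤ y) (hz : z ∈ Set.Icc y (y + r))
    (hz1 : z ≤ 1) : |z - r * level r y| ≤ r := by
  have hk : r * ⌊y / r⌋₊ ≤ y := by
    rw [mul_comm, ← le_div_iff₀ hr]; exact Nat.floor_le (div_nonneg hy hr.le)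
  have hk' : y < r * (⌊y / r⌋₊ + 1) := by
    rw [mul_comm, ← div_lt_iff₀ hr]; exact Nat.lt_floor_add_one _
  have hL : r * ⌊1 / r⌋₊ ≤ 1 := by
    rw [mul_comm, ← le_div_iff₀ hr]; exact Nat.floor_le (by positivity)
  have hL' : 1 < r * (⌊1 / r⌋₊ + 1) := by
    rw [mul_comm, ← div_lt_iff₀ hr]; exact Nat.lt_floor_add_one _
  obtain ⟨hyz, hzy⟩ := hz
  rw [abs_le]
  rcases min_cases (⌊y / r⌋₊ + 1) ⌊1 / r⌋₊ with ⟨h, -⟩ | ⟨h, hlt⟩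
  · rw [level, h]; push_cast
    constructor <;> linarith
  · have : r * ⌊1 / r⌋₊ ≤ r * ⌊y / r⌋₊ :=
      mul_le_mul_of_nonneg_left (by exact_mod_cast Nat.lt_succ_iff.1 hlt) hr.le
    rw [level, h]
    constructor <;> linarith

theorem level_le_level_add_one (hr : 0 < r) {y y' : ℝ} (hy : 0 ≤ y)
    (hy' : y' ∈ Set.Icc y (y + r)) :
    level r y ≤ level r y' ∧ level r y' ≤ level r y + 1 := by
  obtain ⟨hyy', hy'y⟩ := hy'
  have h1 : ⌊y / r⌋₊ ≤ ⌊y' / r⌋₊ := Nat.floor_le_floor (by gcongr)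
  have h2 : ⌊y' / r⌋₊ ≤ ⌊y / r⌋₊ + 1 := by
    rw [← Nat.floor_add_one (div_nonneg hy hr.le)]
    exact Nat.floor_le_floor (by rw [div_add_one hr.ne']; gcongr)
  unfold level
  omega

theorem eq_add_card_filter_lt_succ (q : ℕ → ℕ) {i : ℕ}
    (h : ∀ j < i, q j ≤ q (j + 1) ∧ q (j + 1) ≤ q j + 1) :
    q i = q 0 + #{j ∈ range i | q j < q (j + 1)} := by
  induction i with
  | zero => simp
  | succ i ih =>
    have hi := ih fun j hj => h j (by omega)
    have := h i (by omega)
    rw [range_add_one, filter_insert]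
    split_ifs
    · rw [card_insert_of_notMem (by simp)]; omega
    · omega

variable {a b x : ℝ}

theorem stepFun_mem_Icc (hr : 0 < r) (n c : ℕ) (S : Finset ℕ) (x : ℝ) :
    stepFun a r n c S x ∈ Set.Icc 0 1 := by
  refine ⟨by unfold stepFun; positivity, ?_⟩
  calc stepFun a r n c S x ≤ r * ⌊1 / r⌋₊ := by
        unfold stepFun; gcongr; exact_mod_cast min_le_right _ _
    _ ≤ 1 := by rw [mul_comm, ← le_div_iff₀ hr]; exact Nat.floor_le (by positivity)

theorem add_mul_mem_Icc (hr : 0 < r) (hab : a ≤ b) {i : ℕ} (hi : i ≤ ⌊(b - a) / r⌋₊) :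
    a + i * r ∈ Set.Icc a b := by
  have : (i : ℝ) ≤ (b - a) / r := (Nat.cast_le.2 hi).trans (Nat.floor_le (by bound))
  rw [le_div_iff₀ hr] at this
  exact ⟨by bound, by linarith⟩

theorem mem_Icc_cellIndex (hr : 0 < r) (hx : x ∈ Set.Icc a b) :
    x ∈ Set.Icc (a + cellIndex a r ⌊(b - a) / r⌋₊ x * r)
      (a + cellIndex a r ⌊(b - a) / r⌋₊ x * r + r) := by
  obtain ⟨hax, hxb⟩ := hx
  have hfloor : (⌊(x - a) / r⌋₊ : ℝ) * r ≤ x - a := by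
    rw [← le_div_iff₀ hr]; exact Nat.floor_le (div_nonneg (by linarith) hr.le)
  have hlt : x - a < (⌊(x - a) / r⌋₊ + 1) * r := by
    rw [← div_lt_iff₀ hr]; exact Nat.lt_floor_add_one _
  have hlt' : b - a < (⌊(b - a) / r⌋₊ + 1) * r := by
    rw [← div_lt_iff₀ hr]; exact Nat.lt_floor_add_one _
  unfold cellIndex
  rcases min_cases ⌊(b - a) / r⌋₊ ⌊(x - a) / r⌋₊ with ⟨h, hle⟩ | ⟨h, hlt''⟩
  · rw [h]
    have : ⌊(b - a) / r⌋₊ * r ≤ ⌊(x - a) / r⌋₊ * r := by gcongr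
    constructor <;> linarith
  · rw [h]
    constructor <;> linarith

theorem exists_stepFun_approx (hr : 0 < r) (hr1 : r ≤ 1) (hab : a ≤ b) {g : ℝ → ℝ}
    (hmono : MonotoneOn g (Set.Icc a b)) (hlip : LipschitzOnWith 1 g (Set.Icc a b))
    (hmaps : Set.MapsTo g (Set.Icc a b) (Set.Icc 0 1)) :
    ∃ c ∈ Icc 1 ⌊1 / r⌋₊, ∃ S ⊆ range ⌊(b - a) / r⌋₊, ∀ x ∈ Set.Icc a b,
      |g x - stepFun a r ⌊(b - a) / r⌋₊ c S x| ≤ r := by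
  set n := ⌊(b - a) / r⌋₊
  set q : ℕ → ℕ := fun i => level r (g (a + i * r))
  have hgrid : ∀ i ≤ n, a + i * r ∈ Set.Icc a b := fun i hi => add_mul_mem_Icc hr hab hi
  have hsteps : ∀ j < n, q j ≤ q (j + 1) ∧ q (j + 1) ≤ q j + 1 := fun j hj =>
    level_le_level_add_one hr (hmaps (hgrid j hj.le)).1 <|
      hmono.mem_Icc_of_lipschitzOnWith_one hlip (hgrid j hj.le) (hgrid (j + 1) hj)
        (by push_cast; linarith) (by push_cast; linarith)
  refine ⟨q 0, mem_Icc.2 ⟨one_le_level hr hr1 _, min_le_right _ _⟩,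
    {j ∈ range n | q j < q (j + 1)}, filter_subset _ _, fun x hx => ?_⟩
  set i := cellIndex a r n x
  have hin : i ≤ n := min_le_left _ _
  have hstep : stepFun a r n (q 0) {j ∈ range n | q j < q (j + 1)} x = r * q i := by
    have : #{j ∈ {j ∈ range n | q j < q (j + 1)} | j < i} =
        #{j ∈ range i | q j < q (j + 1)} := by
      congr 1; ext j; simp only [mem_filter, mem_range]; omega
    rw [stepFun, this, ← eq_add_card_filter_lt_succ q fun j hj => hsteps j (by omega),
      min_eq_left (show q i ≤ ⌊1 / r⌋₊ from min_le_right _ _)]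
  rw [hstep]
  obtain ⟨hlo, hhi⟩ := mem_Icc_cellIndex hr hx
  exact abs_sub_mul_level_le hr (hmaps (hgrid i hin)).1
    (hmono.mem_Icc_of_lipschitzOnWith_one hlip (hgrid i hin) hx hlo hhi) (hmaps hx).2

theorem exists_net_card_le (hr : 0 < r) (hr1 : r ≤ 1) (hab : a ≤ b) :
    ∃ N : Finset (ℝ → ℝ), (∀ f ∈ N, Set.MapsTo f (Set.Icc a b) (Set.Icc 0 1)) ∧
      N.card ≤ ⌊1 / r⌋₊ * 2 ^ ⌊(b - a) / r⌋₊ ∧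
      ∀ g : ℝ → ℝ, MonotoneOn g (Set.Icc a b) → LipschitzOnWith 1 g (Set.Icc a b) →
        Set.MapsTo g (Set.Icc a b) (Set.Icc 0 1) →
        ∃ f ∈ N, ∀ x ∈ Set.Icc a b, |g x - f x| ≤ r := by
  classical
  refine ⟨(Icc 1 ⌊1 / r⌋₊ ×ˢ (range ⌊(b - a) / r⌋₊).powerset).image
    fun p => stepFun a r ⌊(b - a) / r⌋₊ p.1 p.2, ?_, ?_, ?_⟩
  · simp only [mem_image]
    rintro f ⟨p, -, rfl⟩ x -
    exact stepFun_mem_Icc hr _ _ _ _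
  · refine card_image_le.trans ?_
    simp [card_product, card_powerset]
  · intro g hmono hlip hmaps
    obtain ⟨c, hc, S, hS, happrox⟩ := exists_stepFun_approx hr hr1 hab hmono hlip hmaps
    exact ⟨_, mem_image.2 ⟨(c, S), mem_product.2 ⟨hc, mem_powerset.2 hS⟩, rfl⟩, happrox⟩

end

end MonotoneLipschitzNet

open MonotoneLipschitzNet in
/-- the L_∞ covering number at radius r ∈ (0,1] of the class of monotone
nondecreasing 1-Lipschitz [0,1]-valued functions on [−W, W] is at most (1/r)·2^{2W/r}. -/
theorem covering_number_monotone_lipschitz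
    (W r : ℝ) (hW : 0 < W) (hr : 0 < r) (hr1 : r ≤ 1) :
    ∃ N : Finset (ℝ → ℝ),
      (∀ f ∈ N, Set.MapsTo f (Set.Icc (-W) W) (Set.Icc (0 : ℝ) 1)) ∧
      (N.card : ℝ) ≤ (1 / r) * (2 : ℝ) ^ (2 * W / r) ∧
      ∀ g : ℝ → ℝ, MonotoneOn g (Set.Icc (-W) W) →
        LipschitzOnWith 1 g (Set.Icc (-W) W) →
        Set.MapsTo g (Set.Icc (-W) W) (Set.Icc (0 : ℝ) 1) →
        ∃ f ∈ N, ∀ x ∈ Set.Icc (-W) W, |g x - f x| ≤ r := by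
  obtain ⟨N, hmaps, hcard, hcover⟩ := exists_net_card_le hr hr1 (neg_le_self hW.le)
  refine ⟨N, hmaps, ?_, hcover⟩
  rw [sub_neg_eq_add, ← two_mul] at hcard
  calc (N.card : ℝ) ≤ ⌊1 / r⌋₊ * (2 : ℝ) ^ ⌊2 * W / r⌋₊ := by exact_mod_cast hcard
    _ ≤ (1 / r) * (2 : ℝ) ^ (2 * W / r) := by
      rw [← Real.rpow_natCast]
      gcongr
      · exact Nat.floor_le (by positivity)
      · exact one_le_two
      · exact Nat.floor_le (by positivity)
end

section
/- Let p₁, …, pₙ ∈ ℝ and z₁, …, zₙ ∈ ℝ satisfy the LPAV constraints: 0 ≤ z_j − z_i ≤ p_j − p_i whenever p_i ≤ p_j. Let p_{(1)} ≤ … ≤ p_{(n)} be the sorted values of the p_i with z_{(i)} the corresponding z-values (well-defined, since p_i = p_j forces z_i = z_j), and define ĝ : ℝ → ℝ by ĝ(ζ) = z_{(1)} for ζ ≤ p_{(1)}, ĝ(ζ) = z_{(n)} for ζ ≥ p_{(n)}, and ĝ(μ·p_{(i)} + (1−μ)·p_{(i+1)}) = μ·z_{(i)} + (1−μ)·z_{(i+1)}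 for μ ∈ [0,1] and 1 ≤ i < n. Then ĝ is well-defined, monotone nondecreasing, 1-Lipschitz on all of ℝ, and satisfies ĝ(p_i) = z_i for every i. -/
/-!
The data define a function `f` on the node set `S = {p i}` (feasibility forces `z i = z j` when
`p i = p j`) which is nondecreasing and 1-Lipschitz there. Interpolate `f` linearly between
consecutive nodes and extend it by constants. Every chord between nodes then has slope in `[0, 1]`.
For `x ≤ y`, either both points lie on one chord, or some node lies between them, and then the
estimate chains from `x` through the node just above `x` and the node just below `y` to `y`.
-/

open Set
open scoped NNReal

noncomputable section

-- For `s = t` this is the constant `f s`, since `slope f s s = 0`.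
def chord (f : ℝ → ℝ) (s t x : ℝ) : ℝ := f s + slope f s t * (x - s)

section Chord

variable {f : ℝ → ℝ} {s t : ℝ}

@[simp] lemma chord_left : chord f s t s = f s := by simp [chord]

@[simp] lemma chord_right : chord f s t t = f t := by
  have h := sub_smul_slope f s t
  rw [smul_eq_mul, vsub_eq_sub] at h
  rw [chord]
  linarith

lemma chord_mul_add_one_sub_mul (μ : ℝ) :
    chord f s t (μ * s + (1 - μ) * t) = μ * f s + (1 - μ) * f t := by
  have h := sub_smul_slope f s t
  rw [smul_eq_mul, vsub_eq_sub] at h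
  rw [chord]
  linear_combination (1 - μ) * h

lemma monotone_chord_of_monotoneOn {S : Set ℝ} (hf : MonotoneOn f S) (hs : s ∈ S) (ht : t ∈ S) :
    Monotone (chord f s t) := by
  have hslope : 0 ≤ slope f s t := by
    rcases le_total s t with hst | hts
    · rw [slope_def_field]
      exact div_nonneg (sub_nonneg.2 (hf hs ht hst)) (sub_nonneg.2 hst)
    · rw [slope_comm, slope_def_field]
      exact div_nonneg (sub_nonneg.2 (hf ht hs hts)) (sub_nonneg.2 hts)
  intro x y hxy
  simp only [chord]
  gcongr

lemma lipschitzWith_chord_of_lipschitzOnWith {S : Set ℝ} {K : ℝ≥0}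
    (hf : LipschitzOnWith K f S) (hs : s ∈ S) (ht : t ∈ S) :
    LipschitzWith K (chord f s t) := by
  have hslope : |slope f s t| ≤ K := by
    rw [slope_def_field, abs_div]
    refine div_le_of_le_mul₀ (abs_nonneg _) K.coe_nonneg ?_
    simpa only [Real.dist_eq] using hf.dist_le_mul t ht s hs
  refine LipschitzWith.of_dist_le_mul fun x y => ?_
  have hsub : chord f s t x - chord f s t y = slope f s t * (x - y) := by
    simp only [chord]
    ring
  rw [Real.dist_eq, Real.dist_eq, hsub, abs_mul]
  gcongr

end Chord

lemma MonotoneOn.lipschitzOnWith_one {f : ℝ → ℝ} {S : Set ℝ} (hf : MonotoneOn f S)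
    (h : ∀ x ∈ S, ∀ y ∈ S, x ≤ y → f y - f x ≤ y - x) : LipschitzOnWith 1 f S := by
  refine LipschitzOnWith.of_dist_le_mul fun x hx y hy => ?_
  rw [NNReal.coe_one, one_mul, Real.dist_eq, Real.dist_eq]
  rcases le_total x y with hxy | hyx
  · rw [abs_sub_comm, abs_sub_comm x, abs_of_nonneg (sub_nonneg.2 (hf hx hy hxy)),
      abs_of_nonneg (sub_nonneg.2 hxy)]
    exact h x hx y hy hxy
  · rw [abs_of_nonneg (sub_nonneg.2 (hf hy hx hyx)), abs_of_nonneg (sub_nonneg.2 hyx)]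
    exact h y hy x hx hyx

namespace Finset

variable (S : Finset ℝ) (f : ℝ → ℝ)

-- Both are genuine nodes (rather than the junk `sSup ∅ = 0`) only for `x ∈ [min S, max S]`.
def lowerNode (x : ℝ) : ℝ := sSup ↑(S.filter (· ≤ x))

def upperNode (x : ℝ) : ℝ := sInf ↑(S.filter (x ≤ ·))

def neighborChord (x : ℝ) : ℝ := chord f (S.lowerNode x) (S.upperNode x) x

def plInterp (hS : S.Nonempty) : ℝ → ℝ :=
  IccExtend (S.min'_le_max' hS) fun x => S.neighborChord f x

variable {S f} {s t x y : ℝ}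

lemma le_lowerNode (hs : s ∈ S) (hsx : s ≤ x) : s ≤ S.lowerNode x :=
  le_csSup (Finset.bddAbove _) (by simp [hs, hsx])

lemma upperNode_le (hs : s ∈ S) (hxs : x ≤ s) : S.upperNode x ≤ s :=
  csInf_le (Finset.bddBelow _) (by simp [hs, hxs])

lemma lowerNode_eq (hs : s ∈ S) (hsx : s ≤ x) (h : ∀ u ∈ S, u ≤ x → u ≤ s) :
    S.lowerNode x = s :=
  IsGreatest.csSup_eq ⟨by simp [hs, hsx], fun u hu =>
    h u (mem_filter.1 hu).1 (mem_filter.1 hu).2⟩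

lemma upperNode_eq (hs : s ∈ S) (hxs : x ≤ s) (h : ∀ u ∈ S, x ≤ u → s ≤ u) :
    S.upperNode x = s :=
  IsLeast.csInf_eq ⟨by simp [hs, hxs], fun u hu =>
    h u (mem_filter.1 hu).1 (mem_filter.1 hu).2⟩

lemma lowerNode_mem_filter (h : ∃ s ∈ S, s ≤ x) : S.lowerNode x ∈ S.filter (· ≤ x) :=
  Finset.Nonempty.csSup_mem (by simpa [Finset.Nonempty] using h)

lemma upperNode_mem_filter (h : ∃ s ∈ S, x ≤ s) : S.upperNode x ∈ S.filter (x ≤ ·) :=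
  Finset.Nonempty.csInf_mem (by simpa [Finset.Nonempty] using h)

lemma neighborChord_of_mem (hx : x ∈ S) : S.neighborChord f x = f x := by
  rw [neighborChord, lowerNode_eq hx le_rfl fun _ _ => id, chord_left]

lemma neighborChord_eq_chord (hs : s ∈ S) (ht : t ∈ S) (hgap : ∀ u ∈ S, u ≤ s ∨ t ≤ u)
    (hx : x ∈ Set.Icc s t) : S.neighborChord f x = chord f s t x := by
  by_cases hxS : x ∈ S
  · rw [neighborChord_of_mem hxS]
    rcases hgap x hxS with hxs | htx
    · rw [le_antisymm hxs hx.1, chord_left]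
    · rw [le_antisymm hx.2 htx, chord_right]
  have hlo : S.lowerNode x = s := lowerNode_eq hs hx.1 fun u hu hux =>
    (hgap u hu).resolve_right fun htu => hxS (le_antisymm hux (hx.2.trans htu) ▸ hu)
  have hhi : S.upperNode x = t := upperNode_eq ht hx.2 fun u hu hxu =>
    (hgap u hu).resolve_left fun hus => hxS (le_antisymm (hus.trans hx.1) hxu ▸ hu)
  rw [neighborChord, hlo, hhi]

variable (hS : S.Nonempty)

lemma neighbors_of_mem_Icc (hx : x ∈ Set.Icc (S.min' hS) (S.max' hS)) :
    S.lowerNode x ∈ S ∧ S.upperNode x ∈ S ∧ S.lowerNode x ≤ x ∧ x ≤ S.upperNode x := by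
  have hlo := mem_filter.1 (lowerNode_mem_filter ⟨_, S.min'_mem hS, hx.1⟩)
  have hhi := mem_filter.1 (upperNode_mem_filter ⟨_, S.max'_mem hS, hx.2⟩)
  exact ⟨hlo.1, hhi.1, hlo.2, hhi.2⟩

lemma neighbors_eq_or_upperNode_le_lowerNode (hx : x ∈ Set.Icc (S.min' hS) (S.max' hS))
    (hxy : x ≤ y) :
    (S.lowerNode y = S.lowerNode x ∧ S.upperNode y = S.upperNode x) ∨
      S.upperNode x ≤ S.lowerNode y := by
  obtain ⟨hlo, hhi, hlox, hxhi⟩ := neighbors_of_mem_Icc hS hx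
  by_cases hsep : S.upperNode x ≤ y
  · exact Or.inr (le_lowerNode hhi hsep)
  rw [not_le] at hsep
  refine Or.inl ⟨lowerNode_eq hlo (hlox.trans hxy) fun u hu huy => ?_,
    upperNode_eq hhi hsep.le fun u hu hyu => upperNode_le hu (hxy.trans hyu)⟩
  exact le_lowerNode hu (not_lt.1 fun hxu => (upperNode_le hu hxu.le).not_gt (huy.trans_lt hsep))

lemma monotoneOn_neighborChord (hf : MonotoneOn f S) :
    MonotoneOn (S.neighborChord f) (Set.Icc (S.min' hS) (S.max' hS)) := by
  intro x hx y hy hxy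
  obtain ⟨hlo, hhi, -, hxhi⟩ := neighbors_of_mem_Icc hS hx
  obtain ⟨hlo', hhi', hlox', -⟩ := neighbors_of_mem_Icc hS hy
  rcases neighbors_eq_or_upperNode_le_lowerNode hS hx hxy with ⟨hl, hu⟩ | hsep
  · rw [neighborChord, neighborChord, hl, hu]
    exact monotone_chord_of_monotoneOn hf hlo hhi hxy
  calc S.neighborChord f x ≤ chord f (S.lowerNode x) (S.upperNode x) (S.upperNode x) :=
        monotone_chord_of_monotoneOn hf hlo hhi hxhi
    _ = f (S.upperNode x) := chord_right
    _ ≤ f (S.lowerNode y) := hf hhi hlo' hsep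
    _ = chord f (S.lowerNode y) (S.upperNode y) (S.lowerNode y) := chord_left.symm
    _ ≤ S.neighborChord f y := monotone_chord_of_monotoneOn hf hlo' hhi' hlox'

lemma lipschitzOnWith_neighborChord {K : ℝ≥0} (hf : LipschitzOnWith K f S) :
    LipschitzOnWith K (S.neighborChord f) (Set.Icc (S.min' hS) (S.max' hS)) := by
  refine LipschitzOnWith.of_dist_le_mul fun x hx y hy => ?_
  wlog hxy : x ≤ y generalizing x y
  · rw [dist_comm, dist_comm x]
    exact this y hy x hx (le_of_not_ge hxy)
  obtain ⟨hlo, hhi, -, hxhi⟩ := neighbors_of_mem_Icc hS hx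
  obtain ⟨hlo', hhi', hlox', -⟩ := neighbors_of_mem_Icc hS hy
  rcases neighbors_eq_or_upperNode_le_lowerNode hS hx hxy with ⟨hl, hu⟩ | hsep
  · rw [neighborChord, neighborChord, hl, hu]
    exact (lipschitzWith_chord_of_lipschitzOnWith hf hlo hhi).dist_le_mul x y
  have hx' := (lipschitzWith_chord_of_lipschitzOnWith hf hlo hhi).dist_le_mul x (S.upperNode x)
  have hmid := hf.dist_le_mul _ hhi _ hlo'
  have hy' := (lipschitzWith_chord_of_lipschitzOnWith hf hlo' hhi').dist_le_mul (S.lowerNode y) y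
  rw [chord_right] at hx'
  rw [chord_left] at hy'
  calc dist (S.neighborChord f x) (S.neighborChord f y)
      ≤ K * dist x (S.upperNode x) + K * dist (S.upperNode x) (S.lowerNode y) +
          K * dist (S.lowerNode y) y :=
        (dist_triangle4 _ _ _ _).trans (add_le_add_three hx' hmid hy')
    _ = K * dist x y := by
        rw [Real.dist_eq, Real.dist_eq, Real.dist_eq, Real.dist_eq,
          abs_of_nonpos (sub_nonpos.2 hxhi), abs_of_nonpos (sub_nonpos.2 hsep),
          abs_of_nonpos (sub_nonpos.2 hlox'), abs_of_nonpos (sub_nonpos.2 hxy)]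
        ring

lemma plInterp_of_mem (hx : x ∈ S) : S.plInterp f hS x = f x := by
  rw [plInterp, IccExtend_of_mem _ _ ⟨S.min'_le x hx, S.le_max' x hx⟩, neighborChord_of_mem hx]

lemma plInterp_of_le_of_isLeast (hs : IsLeast (S : Set ℝ) s) (hx : x ≤ s) :
    S.plInterp f hS x = f s := by
  obtain rfl := hs.unique (S.isLeast_min' hS)
  rw [plInterp, IccExtend_of_le_left _ _ hx, neighborChord_of_mem (S.min'_mem hS)]

lemma plInterp_of_isGreatest_of_le (hs : IsGreatest (S : Set ℝ) s) (hx : s ≤ x) :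
    S.plInterp f hS x = f s := by
  obtain rfl := hs.unique (S.isGreatest_max' hS)
  rw [plInterp, IccExtend_of_right_le _ _ hx, neighborChord_of_mem (S.max'_mem hS)]

lemma plInterp_eq_chord (hs : s ∈ S) (ht : t ∈ S) (hgap : ∀ u ∈ S, u ≤ s ∨ t ≤ u)
    (hx : x ∈ Set.Icc s t) : S.plInterp f hS x = chord f s t x := by
  rw [plInterp, IccExtend_of_mem _ _ ⟨(S.min'_le s hs).trans hx.1, hx.2.trans (S.le_max' t ht)⟩,
    neighborChord_eq_chord hs ht hgap hx]

lemma monotone_plInterp (hf : MonotoneOn f S) : Monotone (S.plInterp f hS) :=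
  (monotoneOn_iff_monotone.1 (monotoneOn_neighborChord hS hf)).IccExtend _

lemma lipschitzWith_plInterp {K : ℝ≥0} (hf : LipschitzOnWith K f S) :
    LipschitzWith K (S.plInterp f hS) := by
  have h := (lipschitzOnWith_neighborChord hS hf).to_restrict.comp
    (LipschitzWith.projIcc (S.min'_le_max' hS))
  rw [mul_one] at h
  exact h

end Finset

end

/-- given LPAV-feasible values (0 ≤ z_j − z_i ≤ p_j − p_i whenever
p_i ≤ p_j), the piecewise linear interpolation — constant to the left of the smallest
p, constant to the right of the largest p, and affine between consecutive sorted p's —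
gives a well-defined, monotone nondecreasing, 1-Lipschitz function ĝ : ℝ → ℝ with
ĝ(p_i) = z_i for every i. -/
theorem lpav_interpolation
    (n : ℕ) (hn : 0 < n) (p z : Fin n → ℝ)
    (hfeas : ∀ i j : Fin n, p i ≤ p j → 0 ≤ z j - z i ∧ z j - z i ≤ p j - p i) :
    ∃ ghat : ℝ → ℝ,
      Monotone ghat ∧
      LipschitzWith 1 ghat ∧
      (∀ i, ghat (p i) = z i) ∧
      -- constant at the value of the smallest p to the left of it
      (∀ (i : Fin n), (∀ j, p i ≤ p j) → ∀ ζ : ℝ, ζ ≤ p i → ghat ζ = z i) ∧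
      -- constant at the value of the largest p to the right of it
      (∀ (i : Fin n), (∀ j, p j ≤ p i) → ∀ ζ : ℝ, p i ≤ ζ → ghat ζ = z i) ∧
      -- linear interpolation between consecutive sorted values
      (∀ (i j : Fin n), p i ≤ p j → (∀ k, p k ≤ p i ∨ p j ≤ p k) →
        ∀ μ ∈ Set.Icc (0 : ℝ) 1,
          ghat (μ * p i + (1 - μ) * p j) = μ * z i + (1 - μ) * z j) := by
  set S := Finset.univ.image p
  have hS : S.Nonempty := (Finset.univ_nonempty_iff.2 (Fin.pos_iff_nonempty.1 hn)).image p
  have hmem : ∀ i, p i ∈ S := fun i => Finset.mem_image_of_mem p (Finset.mem_univ i)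
  have forall_mem_S : ∀ P : ℝ → Prop, (∀ i, P (p i)) → ∀ s ∈ S, P s := fun P h =>
    Finset.forall_mem_image.2 fun i _ => h i
  set f := Function.extend p z 0
  have hfp : ∀ i, f (p i) = z i := fun i =>
    Function.FactorsThrough.extend_apply (fun a b hab =>
      le_antisymm (sub_nonneg.1 (hfeas a b hab.le).1) (sub_nonneg.1 (hfeas b a hab.ge).1)) 0 i
  have hfS : ∀ s ∈ S, ∀ t ∈ S, s ≤ t → f s ≤ f t ∧ f t - f s ≤ t - s :=
    forall_mem_S _ fun i => forall_mem_S _ fun j hij => by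
      rw [hfp, hfp]
      exact ⟨sub_nonneg.1 (hfeas i j hij).1, (hfeas i j hij).2⟩
  have hmono : MonotoneOn f S := fun s hs t ht hst => (hfS s hs t ht hst).1
  have hlip : LipschitzOnWith 1 f S :=
    hmono.lipschitzOnWith_one fun s hs t ht hst => (hfS s hs t ht hst).2
  refine ⟨S.plInterp f hS, S.monotone_plInterp hS hmono, S.lipschitzWith_plInterp hS hlip,
    fun i => by rw [S.plInterp_of_mem hS (hmem i), hfp], ?_, ?_, ?_⟩
  · intro i hmin ζ hζ
    rw [Finset.plInterp_of_le_of_isLeast hS ⟨hmem i, forall_mem_S _ hmin⟩ hζ, hfp]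
  · intro i hmax ζ hζ
    rw [Finset.plInterp_of_isGreatest_of_le hS ⟨hmem i, forall_mem_S _ hmax⟩ hζ, hfp]
  · intro i j hij hgap μ ⟨hμ0, hμ1⟩
    have hx : μ * p i + (1 - μ) * p j ∈ Set.Icc (p i) (p j) := ⟨by nlinarith, by nlinarith⟩
    rw [Finset.plInterp_eq_chord hS (hmem i) (hmem j) (forall_mem_S _ hgap) hx, chord_mul_add_one_sub_mul,
      hfp, hfp]
end
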